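/- Let p be a prime number and let (M_i, f_i : M_{i+1} → M_i)_{i∈ℕ} be a projective system of ℤ_p-modules such that every M_i is torsion with finite exponent, i.e., for each i there exists e_i ∈ ℕ with p^{e_i}·M_i = 0. Then lim¹ M_i, defined as the cokernel of the homomorphism d : ∏_{i∈ℕ} M_i → ∏_{i∈ℕ} M_i sending (m_i)_i to (m_i − f_i(m_{i+1}))_i, is a weakly p-complete ℤ_p-module. -/

import Mathlib

/-
Writing `T m = (m i - p • m (i+1))_i` for the operator on sequences, `N` is weakly `p`-complete
exactly when `T` is bijective on `ℕ → N`. If `p ^ e` kills `N`, then `T` is bijective: a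
solution of `T m = 0` satisfies `m j = p ^ e • m (j + e) = 0`, and `T` has the truncated
geometric series `∑_{k<e} p ^ k • t (j + k)` as inverse. Bijectivity passes to products, so it
holds for `P = ∏ M i`. Finally, for `d : P → Q`, surjectivity of `T` passes from `Q` to
`Q / d(P)`, and a diagram chase using injectivity on `Q` and surjectivity on `P` gives
injectivity on `Q / d(P)`.
-/

/-- A `ℤ_p`-module `N` is weakly `p`-complete (derived `p`-complete) if the only
`p`-divisible sequence in `N` is zero and the map `(n_i)_i ↦ (n_i - p • n_{i+1})_i` on
`∏_{i ∈ ℕ} N` is surjective. -/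
def IsWeaklyPComplete (p : ℕ) [Fact p.Prime] (N : Type*) [AddCommGroup N]
    [Module ℤ_[p] N] : Prop :=
  (∀ m : ℕ → N, (∀ i, m i = (p : ℤ_[p]) • m (i + 1)) → ∀ i, m i = 0) ∧
  Function.Surjective (fun m : ℕ → N => fun i => m i - (p : ℤ_[p]) • m (i + 1))

section SubSMulShift

variable {R : Type*} [CommRing R] (a : R)

def subSMulShift (N : Type*) [AddCommGroup N] [Module R N] : (ℕ → N) →ₗ[R] (ℕ → N) :=
  LinearMap.id - a • LinearMap.funLeft R N Nat.succ

variable {a}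

@[simp]
theorem subSMulShift_apply {N : Type*} [AddCommGroup N] [Module R N] (m : ℕ → N) (i : ℕ) :
    subSMulShift a N m i = m i - a • m (i + 1) :=
  rfl

theorem subSMulShift_comp {N N' : Type*} [AddCommGroup N] [Module R N] [AddCommGroup N']
    [Module R N'] (g : N →ₗ[R] N') (m : ℕ → N) :
    subSMulShift a N' (g ∘ m) = g ∘ subSMulShift a N m := by
  ext i
  simp

section Torsion

variable {N : Type*} [AddCommGroup N] [Module R N] {e : ℕ} (he : ∀ x : N, a ^ e • x = 0)
include he

theorem subSMulShift_injective_of_pow_smul_eq_zero : Function.Injective (subSMulShift a N) := by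
  refine (injective_iff_map_eq_zero _).2 fun m hm => funext fun j => ?_
  have hstep (i : ℕ) : m i = a • m (i + 1) := sub_eq_zero.1 (congr_fun hm i)
  have hpow (k : ℕ) : m j = a ^ k • m (j + k) := by
    induction k with
    | zero => simp
    | succ k ih => rw [ih, hstep, smul_smul, ← pow_succ, add_assoc]
  rw [hpow e, he, Pi.zero_apply]

theorem subSMulShift_surjective_of_pow_smul_eq_zero : Function.Surjective (subSMulShift a N) := by
  intro t
  refine ⟨fun j => ∑ k ∈ Finset.range e, a ^ k • t (j + k), funext fun j => ?_⟩
  have hshift : a • ∑ k ∈ Finset.range e, a ^ k • t (j + 1 + k) =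
      ∑ k ∈ Finset.range e, a ^ (k + 1) • t (j + (k + 1)) := by
    rw [Finset.smul_sum]
    refine Finset.sum_congr rfl fun k _ => ?_
    rw [smul_smul, ← pow_succ', add_right_comm, add_assoc]
  rw [subSMulShift_apply, hshift, ← Finset.sum_sub_distrib, Finset.sum_range_sub', he]
  simp

end Torsion

theorem subSMulShift_pi_bijective {ι : Type*} {M : ι → Type*} [∀ i, AddCommGroup (M i)]
    [∀ i, Module R (M i)] (hM : ∀ i, Function.Bijective (subSMulShift a (M i))) :
    Function.Bijective (subSMulShift a (∀ i, M i)) := by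
  constructor
  · intro m m' h
    funext j i
    have hi : subSMulShift a (M i) (fun k => m k i) = subSMulShift a (M i) (fun k => m' k i) :=
      funext fun k => by simpa using congr_fun (congr_fun h k) i
    exact congr_fun ((hM i).1 hi) j
  · intro t
    choose n hn using fun i => (hM i).2 fun j => t j i
    exact ⟨fun j i => n i j, funext fun j => funext fun i => congr_fun (hn i) j⟩

theorem subSMulShift_quotient_surjective {N : Type*} [AddCommGroup N] [Module R N]
    (S : Submodule R N) (hN : Function.Surjective (subSMulShift a N)) :
    Function.Surjective (subSMulShift a (N ⧸ S)) := by
  intro t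
  choose x hx using fun j => S.mkQ_surjective (t j)
  obtain ⟨n, hn⟩ := hN x
  exact ⟨S.mkQ ∘ n, by rw [subSMulShift_comp, hn]; exact funext hx⟩

theorem subSMulShift_quotient_range_injective {P N : Type*} [AddCommGroup P] [Module R P]
    [AddCommGroup N] [Module R N] (d : P →ₗ[R] N) (hP : Function.Surjective (subSMulShift a P))
    (hN : Function.Injective (subSMulShift a N)) :
    Function.Injective (subSMulShift a (N ⧸ LinearMap.range d)) := by
  refine (injective_iff_map_eq_zero _).2 fun m hm => ?_
  choose x hx using fun j => (LinearMap.range d).mkQ_surjective (m j)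
  have hrange (j : ℕ) : subSMulShift a N x j ∈ LinearMap.range d := by
    rw [← Submodule.Quotient.mk_eq_zero]
    simpa [← hx] using congr_fun hm j
  choose c hc using hrange
  obtain ⟨b, rfl⟩ := hP c
  have hxb : x = d ∘ b := hN (by rw [subSMulShift_comp]; exact (funext hc).symm)
  funext j
  rw [← hx, hxb]
  simp

end SubSMulShift

theorem isWeaklyPComplete_iff_bijective (p : ℕ) [Fact p.Prime] (N : Type*) [AddCommGroup N]
    [Module ℤ_[p] N] :
    IsWeaklyPComplete p N ↔ Function.Bijective (subSMulShift (p : ℤ_[p]) N) := by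
  refine and_congr ?_ Iff.rfl
  rw [injective_iff_map_eq_zero]
  simp only [funext_iff, subSMulShift_apply, Pi.zero_apply, sub_eq_zero]

theorem stmt_6_general (p : ℕ) [Fact p.Prime] (M : ℕ → Type*)
    [∀ i, AddCommGroup (M i)] [∀ i, Module ℤ_[p] (M i)]
    (hexp : ∀ i, ∃ e : ℕ, ∀ x : M i, ((p : ℤ_[p]) ^ e) • x = 0)
    (d : (∀ i, M i) →ₗ[ℤ_[p]] (∀ i, M i)) :
    IsWeaklyPComplete p ((∀ i, M i) ⧸ LinearMap.range d) := by
  have hM (i : ℕ) : Function.Bijective (subSMulShift (p : ℤ_[p]) (M i)) := by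
    obtain ⟨e, he⟩ := hexp i
    exact ⟨subSMulShift_injective_of_pow_smul_eq_zero he,
      subSMulShift_surjective_of_pow_smul_eq_zero he⟩
  have hP := subSMulShift_pi_bijective hM
  rw [isWeaklyPComplete_iff_bijective]
  exact ⟨subSMulShift_quotient_range_injective d hP.2 hP.1,
    subSMulShift_quotient_surjective _ hP.2⟩

/-- If `(M i, f i)` is a projective system of `ℤ_p`-modules which are all torsion with
finite exponent, then `lim¹ M`, the cokernel of `d : ∏ M i → ∏ M i`,
`d m i = m i - f i (m (i+1))`, is a weakly `p`-complete `ℤ_p`-module. -/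
theorem stmt_6 (p : ℕ) [Fact p.Prime] (M : ℕ → Type*)
    [∀ i, AddCommGroup (M i)] [∀ i, Module ℤ_[p] (M i)]
    (f : ∀ i, M (i + 1) →ₗ[ℤ_[p]] M i)
    (hexp : ∀ i, ∃ e : ℕ, ∀ x : M i, ((p : ℤ_[p]) ^ e) • x = 0)
    (d : (∀ i, M i) →ₗ[ℤ_[p]] (∀ i, M i))
    (hd : ∀ (m : ∀ i, M i) (i : ℕ), d m i = m i - f i (m (i + 1))) :
    IsWeaklyPComplete p ((∀ i, M i) ⧸ LinearMap.range d) :=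
  stmt_6_general p M hexp d
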